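/- arXiv:1310.0979 — 3 statements merged into one kernel-verified Lean document; each statement's English description precedes it below -/
import Mathlib

section
/- Let n be a positive integer, m an integer with gcd(m,n)=1, and m* an integer with m·m* ≡ 1 (mod n) and m > m*. Set t = m - m* and S(a,b) = 12·s(a,b). Then S(mt+1, nt) = -3 + 2/(nt) + t/n. -/
noncomputable def saw (x : ℝ) : ℝ :=
  if Int.fract x = 0 then 0 else Int.fract x - 1/2

noncomputable def dedekindSum (m n : ℤ) : ℝ :=
  ∑ k ∈ Finset.Icc 1 n.toNat, saw ((k : ℝ) / (n : ℝ)) * saw ((m : ℝ) * (k : ℝ) / (n : ℝ))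

open Finset

/-!
For coprime `a`, `b` the map `k ↦ a * k % b` permutes `{0, …, b - 1}`, so polarising the product
`((k/b)) ((ak/b))` against the squares turns `12 s(a, b)` into
`b + 2/b - 3 - (6/b²) ∑ₖ (a * k % b - k)²`.

For `a = m t + 1`, `b = n t` write `k = n j + i`. Then `a * k % b - k = t (r - n ε)` with
`r = m i % n` and the carry `ε = (i + t r + n j) / (n t) ∈ {0, 1}`. By Hermite's identity the
class of `i` contains `(i + t r) / n` carries, and `i + t r ≡ m r (mod n)` because `m m* ≡ 1`
and `t ≡ m - m*`; after the substitution `i ↦ m* i` the mixed terms `∑ i r` cancel, leaving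
`∑ₖ (a * k % b - k)² = t³ (n³ - n) / 6`.
-/

lemma Finset.sum_Icc_one_eq_sum_range {M : Type*} [AddCommMonoid M] {f : ℕ → M} {n : ℕ}
    (h0 : f 0 = 0) (hn : f n = 0) : ∑ k ∈ Icc 1 n, f k = ∑ k ∈ range n, f k := by
  rcases Nat.eq_zero_or_pos n with rfl | hpos
  · simp
  rw [range_eq_Ico, sum_eq_sum_Ico_succ_bot hpos, h0, zero_add, ← Ico_add_one_right_eq_Icc,
    sum_Ico_succ_top hpos, hn, add_zero]

lemma Finset.sum_range_mul {M : Type*} [AddCommMonoid M] (f : ℕ → M) (n t : ℕ) :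
    ∑ k ∈ range (n * t), f k = ∑ j ∈ range t, ∑ i ∈ range n, f (n * j + i) := by
  induction t with
  | zero => simp
  | succ t ih => rw [mul_add_one, sum_range_add, ih, sum_range_succ]

lemma sum_range_natCast_mul_two {R : Type*} [CommRing R] (n : ℕ) :
    (∑ k ∈ range n, (k : R)) * 2 = n * (n - 1) := by
  induction n with
  | zero => simp
  | succ n ih => rw [sum_range_succ, add_mul, ih]; push_cast; ring

lemma sum_range_natCast_sq_mul_six {R : Type*} [CommRing R] (n : ℕ) :
    (∑ k ∈ range n, (k : R) ^ 2) * 6 = n * (n - 1) * (2 * n - 1) := by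
  induction n with
  | zero => simp
  | succ n ih => rw [sum_range_succ, add_mul, ih]; push_cast; ring

lemma Int.sum_range_add_ediv {t : ℕ} (ht : 0 < t) (q : ℤ) :
    ∑ j ∈ Finset.range t, (q + j) / t = q := by
  have htZ : (t : ℤ) ≠ 0 := by exact_mod_cast ht.ne'
  have step : ∀ q : ℤ,
      ∑ j ∈ Finset.range t, (q + 1 + j) / t = ∑ j ∈ Finset.range t, (q + j) / t + 1 := by
    intro q
    have hsucc := Finset.sum_range_succ (fun j : ℕ => (q + j) / t) t
    rw [Finset.sum_range_succ', show q + (t : ℤ) = q + t * 1 by ring,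
      Int.add_mul_ediv_left _ _ htZ] at hsucc
    have hshift : ∑ j ∈ Finset.range t, (q + 1 + j) / t
        = ∑ j ∈ Finset.range t, (q + ((j + 1 : ℕ) : ℤ)) / t :=
      Finset.sum_congr rfl fun j _ => by push_cast; ring_nf
    simp only [Nat.cast_zero, add_zero] at hsucc
    linarith
  induction q using Int.induction_on with
  | zero =>
    refine Finset.sum_eq_zero fun j hj => ?_
    exact Int.ediv_eq_zero_of_lt (by omega) (by simpa using hj)
  | succ q ih => rw [step, ih]
  | pred q ih => have := step (-q - 1); rw [sub_add_cancel, ih] at this; linarith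

lemma sum_range_comp_mul_emod {M : Type*} [AddCommMonoid M] {a : ℤ} {b : ℕ} (ha : IsCoprime a b)
    (g : ℤ → M) : ∑ k ∈ range b, g (a * k % b) = ∑ k ∈ range b, g k := by
  obtain ⟨a', c, hac⟩ := ha
  have inv : ∀ x y : ℤ, x * y ≡ 1 [ZMOD b] → ∀ k : ℕ, k < b →
      ((y * ((x * k % b).toNat : ℤ)) % b).toNat = k := by
    intro x y hxy k hk
    have hb : (0 : ℤ) < b := by omega
    have : y * (x * k % b) ≡ k [ZMOD b] :=
      calc y * (x * k % b) ≡ y * (x * k) [ZMOD b] := (Int.mod_modEq _ _).mul_left y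
        _ = x * y * k := by ring
        _ ≡ 1 * k [ZMOD b] := hxy.mul_right k
        _ = k := one_mul _
    rw [Int.toNat_of_nonneg (Int.emod_nonneg _ hb.ne'), this.eq,
      Int.emod_eq_of_lt (by positivity) (by exact_mod_cast hk)]
    simp
  have hinv : a * a' ≡ 1 [ZMOD b] := Int.modEq_iff_dvd.mpr ⟨c, by linear_combination -hac⟩
  have mem : ∀ x : ℤ, ∀ k ∈ range b, (x * k % b).toNat ∈ range b := by
    intro x k hk
    have hb : (0 : ℤ) < b := by have := mem_range.mp hk; omega
    have := Int.emod_lt_of_pos (x * k) hb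
    rw [mem_range]; omega
  refine sum_nbij' (fun k => (a * k % b).toNat) (fun k => (a' * k % b).toNat) (mem a) (mem a')
    (fun k hk => inv a a' hinv k (mem_range.mp hk))
    (fun k hk => inv a' a (by rwa [mul_comm]) k (mem_range.mp hk)) (fun k hk => ?_)
  have hb : (0 : ℤ) < b := by have := mem_range.mp hk; omega
  simp only [Int.toNat_of_nonneg (Int.emod_nonneg _ hb.ne')]

lemma saw_intCast_div {x : ℤ} {b : ℕ} (hb : 0 < b) (hx : ¬ (b : ℤ) ∣ x) :
    saw (x / b) = (x % b : ℤ) / b - 1 / 2 := by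
  have hmod : ((x % b : ℤ) : ℝ) ≠ 0 := by
    exact_mod_cast fun h => hx (Int.dvd_of_emod_eq_zero h)
  rw [saw, Int.fract_div_intCast_eq_div_intCast_mod, if_neg (div_ne_zero hmod (by positivity))]

lemma dedekindSum_eq_sum_range (a : ℤ) (b : ℕ) :
    dedekindSum a b = ∑ k ∈ range b, saw (k / b) * saw (a * k / b) := by
  rw [dedekindSum, Int.toNat_natCast]
  push_cast
  refine sum_Icc_one_eq_sum_range (by simp [saw]) ?_
  rcases Nat.eq_zero_or_pos b with rfl | hb
  · simp [saw]
  · have hbb : (b : ℝ) / b = 1 := div_self (by positivity)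
    simp [saw, mul_div_assoc, hbb]

def sqDisplacement (a : ℤ) (b : ℕ) : ℤ := ∑ k ∈ range b, (a * k % b - k) ^ 2

lemma twelve_mul_dedekindSum_eq {a : ℤ} {b : ℕ} (hb : 0 < b) (ha : IsCoprime a b) :
    12 * dedekindSum a b = b + 2 / b - 3 - 6 * sqDisplacement a b / b ^ 2 := by
  set g : ℤ → ℝ := fun y => y / b - 1 / 2 with hg
  have hterm : ∀ k ∈ range b, saw (k / b) * saw (a * k / b)
      = g k * g (a * k % b) - if k = 0 then 1 / 4 else 0 := by
    intro k hk
    rcases Nat.eq_zero_or_pos k with rfl | hk0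
    · norm_num [saw, g]
    have hkb : k < b := mem_range.mp hk
    have hndvd : ¬ (b : ℤ) ∣ k := fun h => by
      have := Int.le_of_dvd (by exact_mod_cast hk0) h; omega
    have hndvd' : ¬ (b : ℤ) ∣ a * k := fun h => hndvd (ha.symm.dvd_of_dvd_mul_left h)
    have h1 := saw_intCast_div hb hndvd
    have h2 := saw_intCast_div hb hndvd'
    rw [Int.emod_eq_of_lt (by positivity) (by exact_mod_cast hkb)] at h1
    push_cast at h1 h2
    rw [h1, h2, if_neg hk0.ne']
    simp [g]
  have hperm := sum_range_comp_mul_emod ha (fun y => g y ^ 2)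
  have hsquares : ∑ k ∈ range b, g k ^ 2 = (b ^ 2 + 2) / (12 * b) := by
    have h1 : ∑ k ∈ range b, (k : ℝ) = b * (b - 1) / 2 := by
      linarith [sum_range_natCast_mul_two (R := ℝ) b]
    have h2 : ∑ k ∈ range b, (k : ℝ) ^ 2 = b * (b - 1) * (2 * b - 1) / 6 := by
      linarith [sum_range_natCast_sq_mul_six (R := ℝ) b]
    have hexpand : ∀ k : ℕ, g k ^ 2 = (k : ℝ) ^ 2 / b ^ 2 - k / b + 1 / 4 := by
      intro k; simp only [hg, Int.cast_natCast]; field_simp; ring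
    rw [sum_congr rfl fun k _ => hexpand k, sum_add_distrib, sum_sub_distrib, ← sum_div,
      ← sum_div, sum_const, card_range, nsmul_eq_mul, h1, h2]
    field_simp
    ring
  have hpolar : ∀ k : ℕ, g k * g (a * k % b)
      = (g k ^ 2 + g (a * k % b) ^ 2) / 2 - ((a * k % b - k : ℤ) / b : ℝ) ^ 2 / 2 := by
    intro k; simp only [hg]; push_cast; ring
  rw [dedekindSum_eq_sum_range, sum_congr rfl hterm, sum_sub_distrib, sum_ite_eq',
    if_pos (mem_range.mpr hb), sum_congr rfl fun k _ => hpolar k, sum_sub_distrib, ← sum_div,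
    sum_add_distrib, hperm, hsquares, ← sum_div, sqDisplacement]
  simp only [div_pow, ← sum_div]
  push_cast
  field_simp
  ring

lemma Int.sum_range_add_mul_ediv_mul {n t : ℕ} (hn : 0 < n) (ht : 0 < t) (c : ℤ) :
    ∑ j ∈ Finset.range t, (c + n * j) / (n * t) = c / n := by
  have hnZ : (n : ℤ) ≠ 0 := by exact_mod_cast hn.ne'
  rw [← Int.sum_range_add_ediv ht (c / n)]
  refine Finset.sum_congr rfl fun j _ => ?_
  rw [← Int.ediv_ediv_of_nonneg (by positivity), Int.add_mul_ediv_left _ _ hnZ]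

lemma Int.mul_add_one_mul_emod_sub (m n t i j : ℤ) :
    (m * t + 1) * (n * j + i) % (n * t) - (n * j + i)
      = t * (m * i % n - n * ((i + t * (m * i % n) + n * j) / (n * t))) := by
  have hdecomp := Int.mul_ediv_add_emod (m * i) n
  have : (m * t + 1) * (n * j + i)
      = i + t * (m * i % n) + n * j + n * t * (m * i / n + m * j) := by
    linear_combination t * hdecomp.symm
  rw [this, Int.add_mul_emod_self_left, Int.emod_def]
  ring

section Displacement

variable {n t : ℕ} {m m' : ℤ}

lemma sum_range_sq_mul_add_one_mul_emod_sub (hn : 0 < n) (ht : 0 < t)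
    (hinv : m * m' ≡ 1 [ZMOD n]) (htm : m - m' ≡ t [ZMOD n]) {i : ℕ} (hi : i < n) :
    ∑ j ∈ range t, ((m * t + 1) * (n * j + i) % (n * t) - (n * j + i) : ℤ) ^ 2
      = t ^ 2 * (t * (m * i % n) ^ 2
          + (i + t * (m * i % n) - m * (m * i % n) % n) * (n - 2 * (m * i % n))) := by
  set r := m * i % n
  set c : ℤ := i + t * r
  have hnZ : (0 : ℤ) < n := by exact_mod_cast hn
  have hr0 : 0 ≤ r := Int.emod_nonneg _ hnZ.ne'
  have hrn : r < n := Int.emod_lt_of_pos _ hnZ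
  have hcarry : ∀ j ∈ range t, ((c + n * j) / (n * t)) * ((c + n * j) / (n * t) - 1) = 0 := by
    intro j hj
    have hjt : (j : ℤ) < t := by exact_mod_cast mem_range.mp hj
    have hlo : 0 ≤ (c + n * j) / (n * t) := Int.ediv_nonneg (by positivity) (by positivity)
    have hhi : (c + n * j) / (n * t) < 2 :=
      Int.ediv_lt_of_lt_mul (by positivity) (by nlinarith)
    rcases (show (c + n * j) / (n * t) = 0 ∨ (c + n * j) / (n * t) = 1 by omega) with h | h <;>
      simp [h]
  have hmod : c ≡ m * r [ZMOD n] := by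
    have hsq : m * t + 1 ≡ m * m [ZMOD n] := by
      have := (htm.mul_left m).symm.add hinv.symm
      rwa [show m * (m - m') + m * m' = m * m by ring] at this
    calc c ≡ i + t * (m * i) [ZMOD n] := ((Int.mod_modEq _ _).mul_left _).add_left _
      _ = (m * t + 1) * i := by ring
      _ ≡ m * m * i [ZMOD n] := hsq.mul_right _
      _ = m * (m * i) := by ring
      _ ≡ m * r [ZMOD n] := ((Int.mod_modEq _ _).mul_left _).symm
  have hnq : n * (c / n) = c - m * r % n := by
    rw [← hmod.eq]; linarith [Int.mul_ediv_add_emod c n]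
  calc ∑ j ∈ range t, ((m * t + 1) * (n * j + i) % (n * t) - (n * j + i) : ℤ) ^ 2
      = ∑ j ∈ range t, t ^ 2 * (r ^ 2 + n * (n - 2 * r) * ((c + n * j) / (n * t))) := by
        refine sum_congr rfl fun j hj => ?_
        rw [Int.mul_add_one_mul_emod_sub]
        linear_combination (t : ℤ) ^ 2 * n ^ 2 * hcarry j hj
    _ = t ^ 2 * (t * r ^ 2 + (c - m * r % n) * (n - 2 * r)) := by
        rw [← mul_sum, sum_add_distrib, ← mul_sum, Int.sum_range_add_mul_ediv_mul hn ht,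
          ← hnq]
        simp only [sum_const, card_range, nsmul_eq_mul]
        ring

theorem six_mul_sqDisplacement (hinv : m * m' ≡ 1 [ZMOD n]) (htm : m - m' ≡ t [ZMOD n]) :
    6 * sqDisplacement (m * t + 1) (n * t) = t ^ 3 * (n ^ 3 - n) := by
  rcases Nat.eq_zero_or_pos n with rfl | hn
  · simp [sqDisplacement]
  rcases Nat.eq_zero_or_pos t with rfl | ht
  · simp [sqDisplacement]
  have hm : IsCoprime m n := by
    obtain ⟨c, hc⟩ := Int.modEq_iff_dvd.mp hinv
    exact ⟨m', c, by linear_combination -hc⟩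
  have hblocks : sqDisplacement (m * t + 1) (n * t) = t ^ 2 * ∑ i ∈ range n,
      (t * (m * i % n) ^ 2
        + (i + t * (m * i % n) - m * (m * i % n) % n) * (n - 2 * (m * i % n))) := by
    rw [sqDisplacement, sum_range_mul, sum_comm, mul_sum]
    refine sum_congr rfl fun i hi => ?_
    push_cast
    exact sum_range_sq_mul_add_one_mul_emod_sub hn ht hinv htm (mem_range.mp hi)
  have hpermG :=
    sum_range_comp_mul_emod hm fun x : ℤ => t * x ^ 2 + (t * x - m * x % n) * (n - 2 * x)
  have hpermId := sum_range_comp_mul_emod hm id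
  simp only [id] at hpermG hpermId
  have hcollapse : ∑ i ∈ range n,
      (t * (m * i % n) ^ 2 + (i + t * (m * i % n) - m * (m * i % n) % n) * (n - 2 * (m * i % n)))
      = t * (n * ∑ i ∈ range n, (i : ℤ) - ∑ i ∈ range n, (i : ℤ) ^ 2) :=
    calc _ = ∑ i ∈ range n, (t * (m * i % n) ^ 2
              + (t * (m * i % n) - m * (m * i % n) % n) * (n - 2 * (m * i % n)))
            + ∑ i ∈ range n, i * (n - 2 * (m * i % n)) := by
          rw [← sum_add_distrib]; exact sum_congr rfl fun i _ => by ring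
      _ = ∑ i ∈ range n, (t * i ^ 2 + (t * i - m * i % n) * (n - 2 * i))
            + ∑ i ∈ range n, i * (n - 2 * (m * i % n)) := by rw [hpermG]
      _ = ∑ i ∈ range n, (t * (n * i - i ^ 2) + n * (i - m * i % n)) := by
          rw [← sum_add_distrib]; exact sum_congr rfl fun i _ => by ring
      _ = t * (n * ∑ i ∈ range n, (i : ℤ) - ∑ i ∈ range n, (i : ℤ) ^ 2) := by
          simp only [sum_add_distrib, sum_sub_distrib, ← mul_sum, hpermId, sub_self, mul_zero,
            add_zero]
  rw [hblocks, hcollapse]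
  linear_combination (t : ℤ) ^ 3 * (3 * n * sum_range_natCast_mul_two (R := ℤ) n
    - sum_range_natCast_sq_mul_six (R := ℤ) n)

end Displacement

theorem dedekindSum_formula_general (m mstar n : ℤ) (hn : 0 < n)
    (hinv : m * mstar ≡ 1 [ZMOD n]) (hlt : mstar < m) :
    12 * dedekindSum (m * (m - mstar) + 1) (n * (m - mstar)) =
      -3 + 2 / ((n : ℝ) * ((m : ℝ) - (mstar : ℝ))) + ((m : ℝ) - (mstar : ℝ)) / (n : ℝ) := by
  lift n to ℕ using hn.le
  obtain ⟨t, ht⟩ : ∃ t : ℕ, m - mstar = t := ⟨(m - mstar).toNat, by omega⟩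
  have hn0 : n ≠ 0 := by omega
  have ht0 : t ≠ 0 := by omega
  have hcop : IsCoprime (m * t + 1) (n * t : ℕ) := by
    obtain ⟨c, hc⟩ := Int.modEq_iff_dvd.mp hinv
    exact ⟨1 - mstar * t, -(t * c), by push_cast; linear_combination t ^ 2 * hc + t * ht⟩
  have hD : (sqDisplacement (m * t + 1) (n * t) : ℝ) = t ^ 3 * (n ^ 3 - n) / 6 := by
    rw [eq_div_iff (by norm_num), mul_comm]
    exact_mod_cast six_mul_sqDisplacement hinv (by rw [ht])
  rw [show (m : ℝ) - mstar = t by exact_mod_cast ht, ht,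
    show (n : ℤ) * t = (n * t : ℕ) by push_cast; ring,
    twelve_mul_dedekindSum_eq (by positivity) hcop, hD]
  push_cast
  field_simp
  ring

theorem dedekindSum_formula (m mstar n : ℤ) (hn : 0 < n) (h : Int.gcd m n = 1)
    (hinv : m * mstar ≡ 1 [ZMOD n]) (hlt : mstar < m) :
    12 * dedekindSum (m * (m - mstar) + 1) (n * (m - mstar)) =
      -3 + 2 / ((n : ℝ) * ((m : ℝ) - (mstar : ℝ))) + ((m : ℝ) - (mstar : ℝ)) / (n : ℝ) :=
  dedekindSum_formula_general m mstar n hn hinv hlt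
end

section
/- Let j, k, m be integers with 0 < j ≤ k, gcd(j,k) = 1, and mj ≡ 1 (mod k). Set n = k(m² + 1). Then k divides jn, the number -m + jn/k is an integer, and m·(-m + jn/k) ≡ 1 (mod n); that is, -m + jn/k is a multiplicative inverse of m modulo n. -/
-- m·(-m + j(m² + 1)) - 1 = (m² + 1)(mj - 1)
theorem Int.ModEq.mul_neg_add_mul_sq_add_one {j k m : ℤ} (h : m * j ≡ 1 [ZMOD k]) :
    m * (-m + j * (m ^ 2 + 1)) ≡ 1 [ZMOD k * (m ^ 2 + 1)] := by
  have h' := (h.mul_right' (c := m ^ 2 + 1)).sub_right (m ^ 2)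
  convert h' using 1 <;> ring

theorem inverse_mod_general (j k m : ℤ) (hj : 0 < j) (hjk : j ≤ k)
    (hmj : m * j ≡ 1 [ZMOD k]) :
    k ∣ j * (k * (m ^ 2 + 1)) ∧
      m * (-m + j * (k * (m ^ 2 + 1)) / k) ≡ 1 [ZMOD (k * (m ^ 2 + 1))] := by
  have hk : k ≠ 0 := (hj.trans_le hjk).ne'
  have hjn : j * (k * (m ^ 2 + 1)) = k * (j * (m ^ 2 + 1)) := by ring
  refine ⟨⟨_, hjn⟩, ?_⟩
  rw [hjn, Int.mul_ediv_cancel_left _ hk]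
  exact hmj.mul_neg_add_mul_sq_add_one

theorem inverse_mod (j k m : ℤ) (hj : 0 < j) (hjk : j ≤ k) (hgcd : Int.gcd j k = 1)
    (hmj : m * j ≡ 1 [ZMOD k]) :
    k ∣ j * (k * (m ^ 2 + 1)) ∧
      m * (-m + j * (k * (m ^ 2 + 1)) / k) ≡ 1 [ZMOD (k * (m ^ 2 + 1))] :=
  inverse_mod_general j k m hj hjk hmj
end

section
/- Every rational number x ≥ -3 is a limit of values 12·s(a,b): for every ε > 0 there exist a positive integer b and an integer a with gcd(a,b) = 1 such that |x - 12·s(a,b)| < ε. -/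
/-!
Dedekind reciprocity `12 s(h,k) + 12 s(k,h) = -3 + h/k + k/h + 1/(hk)` is proved by expressing
`12 k s(h,k)` through `∑ r ⌊hr/k⌋` and counting the lattice points of `[1,k-1] × [1,h-1]` on
either side of the line `hr = ks`. With the periodicity of `s(·, a)` it gives, for `b = m a + c`,
`12 s(a,b) + 12 s(c,a) = m - 3 + c/a + a/b + 1/(ab)`. Running this along Euclid's algorithm
shows `12 s(c,a) ≡ (c + c')/a (mod 1)` whenever `c c' ≡ 1 (mod a)`, so for `x = p/q` the choice
`a = q`, `c' = p` gives a value `≡ x`. Two further steps with large quotients `m₁, m₂` shift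
`12 s - c/a` by the integer `m₂ - m₁` up to an error `O(1 / min(m₁, m₂))`, which removes the
integer part.
-/

open Finset

theorem saw_add_intCast (x : ℝ) (n : ℤ) : saw (x + n) = saw x := by
  simp only [saw, Int.fract_add_intCast]

theorem saw_intCast (n : ℤ) : saw n = 0 := by
  simp [saw]

theorem saw_natCast_div {n k : ℕ} (hk : 0 < k) (hkn : ¬ k ∣ n) :
    saw ((n : ℝ) / k) = (n % k : ℕ) / k - 1 / 2 := by
  have hmod : ((n % k : ℕ) : ℝ) ≠ 0 := by exact_mod_cast (Nat.dvd_iff_mod_eq_zero.not.mp hkn)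
  rw [saw, Int.fract_div_natCast_eq_div_natCast_mod, if_neg (div_ne_zero hmod (by positivity))]

theorem Nat.Coprime.not_dvd_mul {h k r : ℕ} (hhk : h.Coprime k) (hr : 0 < r) (hrk : r < k) :
    ¬ k ∣ h * r := fun hdvd =>
  absurd (Nat.le_of_dvd hr (hhk.symm.dvd_of_dvd_mul_left hdvd)) (not_le.mpr hrk)

theorem Nat.Coprime.sum_Ioo_mul_mod {M : Type*} [AddCommMonoid M] {h k : ℕ} (hhk : h.Coprime k)
    (f : ℕ → M) : ∑ r ∈ Ioo 0 k, f (h * r % k) = ∑ r ∈ Ioo 0 k, f r := by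
  refine sum_nbij (fun r => h * r % k) (fun r hr => ?_) (fun a ha b hb hab => ?_) (fun t ht => ?_)
    (fun _ _ => rfl)
  · rw [mem_Ioo] at hr ⊢
    exact ⟨Nat.pos_of_ne_zero fun h0 => hhk.not_dvd_mul hr.1 hr.2 (Nat.dvd_of_mod_eq_zero h0),
      Nat.mod_lt _ (hr.1.trans hr.2)⟩
  · rw [coe_Ioo, Set.mem_Ioo] at ha hb
    exact Nat.ModEq.eq_of_lt_of_lt (Nat.ModEq.cancel_left_of_coprime (Nat.coprime_comm.mp hhk) hab)
      ha.2 hb.2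
  · rw [coe_Ioo, Set.mem_Ioo] at ht
    obtain ⟨m, hm, hmt⟩ := Nat.exists_mul_mod_eq_of_coprime t hhk (by omega)
    rw [Nat.mod_eq_of_lt ht.2] at hmt
    refine ⟨m, ?_, hmt⟩
    rw [coe_Ioo, Set.mem_Ioo]
    exact ⟨Nat.pos_of_ne_zero fun h0 => by simp [h0] at hmt; omega, hm⟩

theorem sum_Ioo_zero_eq_sum_range {M : Type*} [AddCommMonoid M] (f : ℕ → M) (hf : f 0 = 0)
    (n : ℕ) : ∑ i ∈ Ioo 0 n, f i = ∑ i ∈ range n, f i := by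
  rcases Nat.eq_zero_or_pos n with rfl | hn
  · simp
  rw [range_eq_Ico, ← Ioo_insert_left hn, sum_insert left_notMem_Ioo, hf, zero_add]

section Gauss

variable {R : Type*} [CommRing R]

theorem sum_Ioo_id_mul_two (n : ℕ) : (∑ i ∈ Ioo 0 n, (i : R)) * 2 = n * (n - 1) := by
  rw [sum_Ioo_zero_eq_sum_range _ Nat.cast_zero]
  induction n with
  | zero => simp
  | succ n ih => rw [sum_range_succ, add_mul, ih]; push_cast; ring

theorem sum_Ioo_sq_mul_six (n : ℕ) :
    (∑ i ∈ Ioo 0 n, (i : R) ^ 2) * 6 = n * (n - 1) * (2 * n - 1) := by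
  rw [sum_Ioo_zero_eq_sum_range (fun i => (i : R) ^ 2) (by simp)]
  induction n with
  | zero => simp
  | succ n ih => rw [sum_range_succ, add_mul, ih]; push_cast; ring

theorem sum_Ioc_id_mul_two (n : ℕ) : (∑ i ∈ Ioc 0 n, (i : R)) * 2 = n * (n + 1) := by
  have hIoc : Ioc 0 n = Ioo 0 (n + 1) := by ext; simp only [mem_Ioc, mem_Ioo]; omega
  rw [hIoc, sum_Ioo_id_mul_two]
  push_cast; ring

end Gauss

theorem Nat.Coprime.filter_Ioo_mul_lt {h k s : ℕ} (hhk : h.Coprime k) (hs : s < h) :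
    (Ioo 0 k).filter (fun r => h * r < k * s) = Ioc 0 (k * s / h) := by
  ext r
  simp only [mem_filter, mem_Ioo, mem_Ioc]
  constructor
  · rintro ⟨⟨hr, -⟩, hlt⟩
    exact ⟨hr, (Nat.le_div_iff_mul_le (by omega)).mpr (by linarith)⟩
  · rintro ⟨hr, hrle⟩
    have hle : h * r ≤ k * s := by rw [mul_comm]; exact (Nat.le_div_iff_mul_le (by omega)).mp hrle
    have hrk : r < k := by
      by_contra! hkr
      nlinarith
    refine ⟨⟨hr, hrk⟩, lt_of_le_of_ne hle fun heq => hhk.not_dvd_mul hr hrk ⟨s, heq⟩⟩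

def floorSum (h k : ℕ) : ℕ := ∑ r ∈ Ioo 0 k, r * (h * r / k)

-- The two sums on the left weight by `s` the lattice points `(r, s)` of `(0, k) × (0, h)` above
-- and below the line `h r = k s`, which by coprimality passes through none of them.
theorem Nat.Coprime.floorSum_add_sum_Ioc {h k : ℕ} (hhk : h.Coprime k) :
    floorSum k h + ∑ r ∈ Ioo 0 k, ∑ s ∈ Ioc 0 (h * r / k), s
      = (k - 1) * ∑ s ∈ Ioo 0 h, s := by
  have hupper :
      floorSum k h = ∑ r ∈ Ioo 0 k, ∑ s ∈ (Ioo 0 h).filter (fun s => h * r < k * s), s := by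
    calc floorSum k h = ∑ s ∈ Ioo 0 h, #((Ioo 0 k).filter (fun r => h * r < k * s)) * s := by
          refine sum_congr rfl fun s hs => ?_
          rw [hhk.filter_Ioo_mul_lt (mem_Ioo.mp hs).2, Nat.card_Ioc, Nat.sub_zero, mul_comm]
      _ = _ := by simp only [← smul_eq_mul, ← sum_const, sum_filter]; exact sum_comm
  have hcard : k - 1 = #(Ioo 0 k) := by simp
  rw [hupper, ← sum_add_distrib, hcard, ← smul_eq_mul, ← sum_const]
  refine sum_congr rfl fun r hr => ?_
  obtain ⟨hr0, hrk⟩ := mem_Ioo.mp hr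
  have hlower : Ioc 0 (h * r / k) = (Ioo 0 h).filter (fun s => ¬ h * r < k * s) := by
    rw [← hhk.symm.filter_Ioo_mul_lt hrk]
    refine filter_congr fun s _ => ?_
    have hne : k * s ≠ h * r := fun heq => hhk.not_dvd_mul hr0 hrk ⟨s, heq.symm⟩
    omega
  rw [hlower, sum_filter_add_sum_filter_not]

theorem Nat.Coprime.floorSum_reciprocity {h k : ℕ} (hhk : h.Coprime k) :
    12 * ((h : ℤ) * floorSum h k + k * floorSum k h)
      = (h - 1) * (k - 1) * (8 * h * k - h - k - 1) := by
  rcases Nat.eq_zero_or_pos k with rfl | hk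
  · simp [(Nat.coprime_zero_right h).mp hhk, floorSum]
  have hdiv : ∀ r, (k : ℤ) * (h * r / k : ℕ) + (h * r % k : ℕ) = h * r := fun r => by
    have := congrArg (Nat.cast : ℕ → ℤ) (Nat.div_add_mod (h * r) k)
    simpa only [Nat.cast_add, Nat.cast_mul] using this
  have hswap :
      (floorSum k h : ℤ) * 2 + ∑ r ∈ Ioo 0 k, ((h * r / k : ℕ) : ℤ) * ((h * r / k : ℕ) + 1)
        = (k - 1) * (h * (h - 1)) := by
    have := congrArg (Nat.cast : ℕ → ℤ) hhk.floorSum_add_sum_Ioc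
    simp only [Nat.cast_add, Nat.cast_mul, Nat.cast_sum, Nat.cast_sub hk, Nat.cast_one] at this
    simp only [← sum_Ioc_id_mul_two, ← sum_Ioo_id_mul_two, ← sum_mul]
    linear_combination 2 * this
  have hlinear :
      (k : ℤ) * floorSum h k
        = h * ∑ r ∈ Ioo 0 k, (r : ℤ) ^ 2 - ∑ r ∈ Ioo 0 k, (r : ℤ) * (h * r % k : ℕ) := by
    simp only [floorSum, Nat.cast_sum, Nat.cast_mul, mul_sum, ← sum_sub_distrib]
    exact sum_congr rfl fun r _ => by linear_combination (r : ℤ) * hdiv r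
  have hquadratic :
      (k : ℤ) ^ 2 * ∑ r ∈ Ioo 0 k, ((h * r / k : ℕ) : ℤ) * ((h * r / k : ℕ) + 1)
        = h ^ 2 * ∑ r ∈ Ioo 0 k, (r : ℤ) ^ 2
          - 2 * h * ∑ r ∈ Ioo 0 k, (r : ℤ) * (h * r % k : ℕ)
          + ∑ r ∈ Ioo 0 k, ((h * r % k : ℕ) : ℤ) ^ 2 + k * h * ∑ r ∈ Ioo 0 k, (r : ℤ)
          - k * ∑ r ∈ Ioo 0 k, ((h * r % k : ℕ) : ℤ) := by
    simp only [mul_sum, ← sum_sub_distrib, ← sum_add_distrib]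
    exact sum_congr rfl fun r _ => by
      linear_combination ((k : ℤ) * (h * r / k : ℕ) + h * r - (h * r % k : ℕ) + k) * hdiv r
  -- Multiplying by `k` leaves sums of powers of `r` and of `h r % k`, a permutation of `(0, k)`.
  have hperm₁ := hhk.sum_Ioo_mul_mod (fun r => (r : ℤ))
  have hperm₂ := hhk.sum_Ioo_mul_mod (fun r => (r : ℤ) ^ 2)
  have hgauss₁ := sum_Ioo_id_mul_two (R := ℤ) k
  have hgauss₂ := sum_Ioo_sq_mul_six (R := ℤ) k
  refine mul_left_cancel₀ (show (k : ℤ) ≠ 0 by positivity) ?_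
  linear_combination 12 * h * hlinear + 6 * k ^ 2 * hswap - 6 * hquadratic - 6 * hperm₂
    + 6 * k * hperm₁ + (h ^ 2 - 1) * hgauss₂ - 3 * k * (h - 1) * hgauss₁

theorem Nat.Coprime.dedekindSum_eq_sum_Ioo {h k : ℕ} (hhk : h.Coprime k) (hk : 0 < k) :
    dedekindSum h k
      = ∑ r ∈ Ioo 0 k, ((r : ℝ) / k - 1 / 2) * ((h * r % k : ℕ) / k - 1 / 2) := by
  have hIcc : Icc 1 k = insert k (Ioo 0 k) := by rw [Ioo_insert_right hk]; ext; simp; omega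
  have hlast : saw ((k : ℝ) / k) = 0 := by
    rw [div_self (by positivity), ← Int.cast_one, saw_intCast]
  rw [dedekindSum, Int.toNat_natCast, hIcc, sum_insert right_notMem_Ioo]
  simp only [Int.cast_natCast, hlast, zero_mul, zero_add]
  refine sum_congr rfl fun r hr => ?_
  obtain ⟨hr0, hrk⟩ := mem_Ioo.mp hr
  rw [saw_natCast_div hk (Nat.not_dvd_of_pos_of_lt hr0 hrk), Nat.mod_eq_of_lt hrk,
    ← Nat.cast_mul, saw_natCast_div hk (hhk.not_dvd_mul hr0 hrk)]

theorem Nat.Coprime.twelve_mul_dedekindSum {h k : ℕ} (hhk : h.Coprime k) (hk : 0 < k) :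
    12 * k * dedekindSum h k
      = 2 * h * (k - 1) * (2 * k - 1) - 12 * floorSum h k - 3 * k * (k - 1) := by
  have hdiv : ∀ r, (k : ℝ) * (h * r / k : ℕ) + (h * r % k : ℕ) = h * r := fun r => by
    have := congrArg (Nat.cast : ℕ → ℝ) (Nat.div_add_mod (h * r) k)
    simpa only [Nat.cast_add, Nat.cast_mul] using this
  have hk₀ : (k : ℝ) ≠ 0 := by positivity
  have hexpand : (k : ℝ) ^ 2 * dedekindSum h k
      = h * ∑ r ∈ Ioo 0 k, (r : ℝ) ^ 2 - k * floorSum h k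
        - k / 2 * ∑ r ∈ Ioo 0 k, (r : ℝ) - k / 2 * ∑ r ∈ Ioo 0 k, ((h * r % k : ℕ) : ℝ)
        + (k - 1) * (k ^ 2 / 4) := by
    have hcard : ((k : ℝ) - 1) * (k ^ 2 / 4) = ∑ r ∈ Ioo 0 k, (k : ℝ) ^ 2 / 4 := by
      simp [Nat.cast_sub hk]
    rw [hhk.dedekindSum_eq_sum_Ioo hk, hcard]
    simp only [floorSum, Nat.cast_sum, Nat.cast_mul, mul_sum, ← sum_sub_distrib,
      ← sum_add_distrib]
    refine sum_congr rfl fun r _ => ?_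
    field_simp
    linear_combination 16 * (r : ℝ) * hdiv r
  have hperm := hhk.sum_Ioo_mul_mod (fun r => (r : ℝ))
  have hgauss₁ := sum_Ioo_id_mul_two (R := ℝ) k
  have hgauss₂ := sum_Ioo_sq_mul_six (R := ℝ) k
  refine mul_left_cancel₀ hk₀ ?_
  linear_combination 12 * hexpand - 6 * k * hperm + 2 * h * hgauss₂ - 6 * k * hgauss₁

theorem Nat.Coprime.dedekind_reciprocity {h k : ℕ} (hhk : h.Coprime k) (hh : 0 < h) (hk : 0 < k) :
    12 * dedekindSum h k + 12 * dedekindSum k h = -3 + h / k + k / h + 1 / (h * k) := by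
  have hhk' := hhk.twelve_mul_dedekindSum hk
  have hkh' := hhk.symm.twelve_mul_dedekindSum hh
  have hfloor := congrArg (Int.cast : ℤ → ℝ) hhk.floorSum_reciprocity
  push_cast at hfloor
  field_simp
  linear_combination h * hhk' + k * hkh' - hfloor

theorem dedekindSum_add_mul_right (c m a : ℤ) : dedekindSum (c + m * a) a = dedekindSum c a := by
  refine sum_congr rfl fun j hj => ?_
  have ha : (a : ℝ) ≠ 0 := by
    have : 0 < a.toNat := by simp only [mem_Icc] at hj; omega
    exact_mod_cast (Int.lt_toNat.mp this).ne'
  have hshift : ((c + m * a : ℤ) : ℝ) * j / a = c * j / a + ((m * j : ℤ) : ℝ) := by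
    push_cast
    field_simp
  rw [hshift, saw_add_intCast]

theorem twelve_dedekindSum_add_of_mul_add_eq {a b c m : ℕ} (ha : 0 < a) (hb : 0 < b)
    (hca : c.Coprime a) (heq : m * a + c = b) :
    12 * dedekindSum a b + 12 * dedekindSum c a = m - 3 + c / a + a / b + 1 / (a * b) := by
  have hab : a.Coprime b := heq ▸ (Nat.coprime_mul_right_add_right a c m).mpr hca.symm
  have hperiod : dedekindSum b a = dedekindSum c a := by
    rw [← heq, Nat.cast_add, Nat.cast_mul, add_comm, dedekindSum_add_mul_right]
  have hba : (b : ℝ) / a = m + c / a := by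
    rw [← heq]; push_cast; field_simp
  linear_combination hab.dedekind_reciprocity ha hb - 12 * hperiod + hba

theorem Int.isCoprime_of_mul_modEq_one {c c' a : ℤ} (h : c * c' ≡ 1 [ZMOD a]) :
    IsCoprime c a := by
  obtain ⟨t, ht⟩ := Int.modEq_iff_dvd.mp h.symm
  exact ⟨c', -t, by linear_combination ht⟩

theorem IsCoprime.exists_natCast_mul_modEq_one {p : ℤ} {q : ℕ} (hq : 0 < q)
    (hpq : IsCoprime p q) :
    ∃ c : ℕ, (c : ℤ) * p ≡ 1 [ZMOD q] := by
  obtain ⟨u, v, huv⟩ := hpq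
  refine ⟨(u % q).toNat, ?_⟩
  rw [Int.toNat_of_nonneg (Int.emod_nonneg u (by positivity))]
  refine ((Int.mod_modEq u q).mul_right p).trans (Int.modEq_iff_dvd.mpr ⟨v, ?_⟩)
  linear_combination -huv

theorem exists_twelve_dedekindSum_eq {c a : ℕ} {c' : ℤ} (ha : 0 < a)
    (hcc' : (c : ℤ) * c' ≡ 1 [ZMOD a]) :
    ∃ n : ℤ, 12 * dedekindSum c a = n + (c + c') / a := by
  induction c using Nat.strong_induction_on generalizing a c' with
  | _ c ih =>
  have hca : c.Coprime a := Nat.isCoprime_iff_coprime.mp (Int.isCoprime_of_mul_modEq_one hcc')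
  rcases Nat.eq_zero_or_pos c with rfl | hc
  · obtain rfl : a = 1 := (Nat.coprime_zero_left a).mp hca
    refine ⟨-c', ?_⟩
    simp [dedekindSum, saw]
  -- Euclid: `a = (a / c) c + a % c`, and `-t` inverts `a % c` modulo `c` when `c c' = 1 + a t`.
  obtain ⟨t, ht⟩ := Int.modEq_iff_dvd.mp hcc'.symm
  have hrc : (a % c : ℕ) * (-t) ≡ 1 [ZMOD c] := by
    refine Int.modEq_iff_dvd.mpr ⟨c' - (a / c : ℕ) * t, ?_⟩
    have := congrArg (Nat.cast : ℕ → ℤ) (Nat.div_add_mod a c)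
    simp only [Nat.cast_mul, Nat.cast_add] at this
    linear_combination -ht + t * this
  obtain ⟨n, hn⟩ := ih (a % c) (Nat.mod_lt a hc) hc hrc
  refine ⟨(a / c : ℕ) - 3 - n, ?_⟩
  have hrc' : (a % c).Coprime c := by rw [Nat.Coprime, ← Nat.gcd_rec]; exact hca
  have hstep := twelve_dedekindSum_add_of_mul_add_eq hc ha hrc' (Nat.div_add_mod' a c)
  have hinv : 1 / ((c : ℝ) * a) + t / c = c' / a := by
    have ht' := congrArg (Int.cast : ℤ → ℝ) ht
    push_cast at ht'
    field_simp
    linear_combination -ht'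
  simp only [Int.cast_sub, Int.cast_natCast, Int.cast_ofNat, Int.cast_neg] at hn ⊢
  linear_combination hstep - hn + hinv

theorem abs_twelve_dedekindSum_sub_le {a b c d m₁ m₂ N : ℕ} (ha : 0 < a) (hN : 0 < N)
    (hm₁ : N ≤ m₁) (hm₂ : N ≤ m₂) (hca : c.Coprime a) (hb : m₁ * a + c = b)
    (hd : m₂ * b + a = d) :
    |12 * dedekindSum b d - (12 * dedekindSum c a - c / a + m₂ - m₁)| ≤ 2 / N := by
  have hNb : N ≤ b := by nlinarith
  have hNd : N * b ≤ d := by nlinarith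
  have hab : a.Coprime b := hb ▸ (Nat.coprime_mul_right_add_right a c m₁).mpr hca.symm
  have hdiff : 12 * dedekindSum b d - (12 * dedekindSum c a - c / a + m₂ - m₁)
      = b / d + 1 / (b * d) - 1 / (a * b) := by
    linear_combination twelve_dedekindSum_add_of_mul_add_eq (by omega) (by nlinarith) hab hd
      - twelve_dedekindSum_add_of_mul_add_eq ha (by omega) hca hb
  have hNR : (0 : ℝ) < N := by exact_mod_cast hN
  have hbd : (b : ℝ) / d ≤ 1 / N := by
    rw [div_le_div_iff₀ (by norm_cast; nlinarith) hNR, one_mul, mul_comm]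
    exact_mod_cast hNd
  have hbd' : 1 / ((b : ℝ) * d) ≤ 1 / N :=
    one_div_le_one_div_of_le hNR (by norm_cast; nlinarith)
  have hab' : 1 / ((a : ℝ) * b) ≤ 1 / N :=
    one_div_le_one_div_of_le hNR (by norm_cast; nlinarith)
  rw [hdiff, abs_le]
  constructor
  · have : 0 ≤ (b : ℝ) / d + 1 / (b * d) := by positivity
    linarith [show (1 : ℝ) / N + 1 / N = 2 / N by ring]
  · have : 0 ≤ 1 / ((a : ℝ) * b) := by positivity
    linarith [show (1 : ℝ) / N + 1 / N = 2 / N by ring]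

theorem rat_ge_neg_three_approx_general (x : ℚ) (ε : ℝ) (hε : 0 < ε) :
    ∃ (a b : ℤ), 0 < b ∧ Int.gcd a b = 1 ∧ |(x : ℝ) - 12 * dedekindSum a b| < ε := by
  obtain ⟨c, hc⟩ := (Rat.isCoprime_num_den x).exists_natCast_mul_modEq_one x.den_pos
  have hca : c.Coprime x.den := Nat.isCoprime_iff_coprime.mp (Int.isCoprime_of_mul_modEq_one hc)
  obtain ⟨n, hn⟩ := exists_twelve_dedekindSum_eq x.den_pos hc
  obtain ⟨N, hN⟩ := exists_nat_gt (2 / ε)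
  have hN₀ : 0 < N := by exact_mod_cast (by positivity : (0 : ℝ) < 2 / ε).trans hN
  set b := (N + n.toNat) * x.den + c
  set d := (N + (-n).toNat) * b + x.den
  have hbd : b.Coprime d := (Nat.coprime_mul_right_add_right b _ _).mpr
    ((Nat.coprime_mul_right_add_right _ c _).mpr hca.symm).symm
  refine ⟨b, d, by positivity, by rw [Int.gcd_natCast_natCast]; exact hbd, ?_⟩
  have hx : 12 * dedekindSum c x.den - c / x.den + (N + (-n).toNat : ℕ) - (N + n.toNat : ℕ)
      = (x : ℝ) := by
    have := congrArg (Int.cast : ℤ → ℝ) (Int.toNat_sub_toNat_neg n)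
    push_cast at this ⊢
    rw [hn, Rat.cast_def]
    linear_combination -this
  have h2N : (2 : ℝ) / N < ε := by rwa [div_lt_iff₀ (by positivity), mul_comm, ← div_lt_iff₀ hε]
  rw [abs_sub_comm, ← hx]
  exact lt_of_le_of_lt
    (abs_twelve_dedekindSum_sub_le x.den_pos hN₀ le_self_add le_self_add hca rfl rfl) h2N

theorem rat_ge_neg_three_approx (x : ℚ) (hx : -3 ≤ x) (ε : ℝ) (hε : 0 < ε) :
    ∃ (a b : ℤ), 0 < b ∧ Int.gcd a b = 1 ∧ |(x : ℝ) - 12 * dedekindSum a b| < ε :=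
  rat_ge_neg_three_approx_general x ε hε
end
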